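/- For every n ∈ ℕ, there exists a graph G on vertex set {1,…,n} with O(n log n) edges, arranged in convex position (edges drawn as chords of a circle), such that every n-vertex caterpillar admits a crossing-free straight-line embedding into G. -/

import Mathlib

/-- Two chords of a convex polygon (vertices in circular order `0, …, n-1`) cross
iff their endpoints interleave. -/
def chordsCross {n : ℕ} (a b c d : Fin n) : Prop :=
  (min a b < min c d ∧ min c d < max a b ∧ max a b < max c d) ∨
  (min c d < min a b ∧ min a b < max c d ∧ max c d < max a b)

/-- A crossing-free embedding of the graph `H` into the convex geometric graph `G`. -/
def IsPlaneEmb {n : ℕ} (H G : SimpleGraph (Fin n)) (f : Fin n → Fin n) : Prop :=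
  Function.Injective f ∧ (∀ u v, H.Adj u v → G.Adj (f u) (f v)) ∧
  ∀ u v x y, H.Adj u v → H.Adj x y →
    u ≠ x → u ≠ y → v ≠ x → v ≠ y → ¬ chordsCross (f u) (f v) (f x) (f y)

/-- A caterpillar: a tree containing a path (the spine) that passes through every
vertex of degree at least two. -/
def IsCaterpillar {n : ℕ} (T : SimpleGraph (Fin n)) : Prop :=
  T.IsTree ∧ ∃ (s : ℕ) (u : Fin s → Fin n), Function.Injective u ∧
    (∀ i j : Fin s, (i : ℕ) + 1 = (j : ℕ) → T.Adj (u i) (u j)) ∧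
    ∀ v : Fin n, (∃ w x, w ≠ x ∧ T.Adj v w ∧ T.Adj v x) → ∃ i, u i = v

/-!
Lay the caterpillar out spine vertex by spine vertex: the spine vertex `u i` and its leaves
occupy a block of consecutive positions, inside which `u i` sits at a position whose ruler
value `2 ^ ν₂` is at least half the block size (any `c` consecutive integers contain a multiple
of `2 ^ ⌊log₂ c⌋`). Each leaf edge then stays inside one block and each spine edge inside two
consecutive blocks, so both are short compared with the ruler value of a spine endpoint, and
vertex-disjoint edges occupy disjoint ranges of blocks, so they do not cross. The graph has at most
`∑ᵢ (8 · 2 ^ ν₂(i) + 1) = O(n log n)` edges, since exactly `⌊n / 2 ^ k⌋` of `1, …, n` are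
divisible by `2 ^ k`.
-/

open Finset

/-- Vertex `a` stands for the integer `a + 1`, with ruler value `2 ^ ν₂(a + 1)`; it is joined to
every vertex within four times its ruler value. -/
def rulerGraph (n : ℕ) : SimpleGraph (Fin n) :=
  SimpleGraph.fromRel fun a b => (a : ℕ).dist b ≤ 4 * ordProj[2] ((a : ℕ) + 1)

lemma sum_ordProj_two_le (n : ℕ) :
    ∑ m ∈ range n, ordProj[2] (m + 1) ≤ n * (Nat.log 2 n + 1) := by
  set L := Nat.log 2 n
  calc ∑ m ∈ range n, ordProj[2] (m + 1)
      ≤ ∑ m ∈ range n, ∑ k ∈ range (L + 1) with 2 ^ k ∣ m + 1, 2 ^ k := by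
        refine sum_le_sum fun m hm => single_le_sum (f := fun k => 2 ^ k) (by simp) ?_
        have hle : ordProj[2] (m + 1) ≤ n :=
          (Nat.ordProj_le 2 m.succ_ne_zero).trans (mem_range.mp hm)
        simp only [mem_filter, mem_range, Nat.ordProj_dvd, and_true]
        exact Nat.lt_succ_of_le (Nat.le_log_of_pow_le one_lt_two hle)
    _ = ∑ k ∈ range (L + 1), ∑ m ∈ range n with 2 ^ k ∣ m + 1, 2 ^ k := by
        simp only [sum_filter]; exact sum_comm
    _ = ∑ k ∈ range (L + 1), n / 2 ^ k * 2 ^ k := by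
        simp only [sum_const, Nat.card_multiples, smul_eq_mul]
    _ ≤ ∑ _k ∈ range (L + 1), n := sum_le_sum fun k _ => Nat.div_mul_le_self n _
    _ = n * (L + 1) := by simp [mul_comm]

lemma card_filter_dist_le (n a r : ℕ) : #{b : Fin n | a.dist b ≤ r} ≤ 2 * r + 1 := by
  calc #{b : Fin n | a.dist b ≤ r} ≤ #(Icc (a - r) (a + r)) := by
        refine card_le_card_of_injOn Fin.val (fun b hb => ?_) Fin.val_injective.injOn
        have hb : a.dist b ≤ r := by simpa using hb
        simp only [coe_Icc, Set.mem_Icc]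
        unfold Nat.dist at hb
        omega
    _ ≤ 2 * r + 1 := by simp only [Nat.card_Icc]; omega

lemma ncard_edgeSet_rulerGraph_le_natLog (n : ℕ) :
    (rulerGraph n).edgeSet.ncard ≤ 9 * n * (Nat.log 2 n + 1) := by
  classical
  rw [← SimpleGraph.coe_edgeFinset, Set.ncard_coe_finset]
  let ball (a : Fin n) : Finset (Fin n) := {b | (a : ℕ).dist b ≤ 4 * ordProj[2] ((a : ℕ) + 1)}
  have hsub : (rulerGraph n).edgeFinset ⊆ univ.biUnion fun a => (ball a).image (s(a, ·)) := by
    intro e he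
    induction e with
    | h a b =>
      rw [SimpleGraph.mem_edgeFinset, SimpleGraph.mem_edgeSet, rulerGraph,
        SimpleGraph.fromRel_adj] at he
      simp only [mem_biUnion, mem_univ, true_and, mem_image, ball, mem_filter]
      rcases he.2 with h | h
      · exact ⟨a, b, h, rfl⟩
      · exact ⟨b, a, h, Sym2.eq_swap⟩
  calc #(rulerGraph n).edgeFinset
      ≤ ∑ a : Fin n, #(ball a) :=
        (card_le_card hsub).trans (card_biUnion_le.trans (sum_le_sum fun a _ => card_image_le))
    _ ≤ ∑ a : Fin n, (8 * ordProj[2] ((a : ℕ) + 1) + 1) :=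
        sum_le_sum fun a _ => (card_filter_dist_le n a _).trans (by omega)
    _ = 8 * ∑ m ∈ range n, ordProj[2] (m + 1) + n := by
        rw [Fin.sum_univ_eq_sum_range (fun m => 8 * ordProj[2] (m + 1) + 1), sum_add_distrib,
          ← mul_sum]
        simp
    _ ≤ 9 * n * (Nat.log 2 n + 1) := by
        have := sum_ordProj_two_le n
        nlinarith

lemma natLog_two_add_one_le {n : ℕ} (hn : 2 ≤ n) : (Nat.log 2 n + 1 : ℝ) ≤ 3 * Real.log n := by
  have hlog2 := Real.log_two_gt_d9
  have hn' : (2 : ℝ) ≤ n := by exact_mod_cast hn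
  have hlog : Real.log 2 ≤ Real.log n := Real.log_le_log (by norm_num) hn'
  have hL : (Nat.log 2 n : ℝ) * Real.log 2 ≤ Real.log n := by
    have := Real.natLog_le_logb n 2
    rwa [Real.logb, Nat.cast_ofNat, le_div_iff₀ (by linarith)] at this
  nlinarith

theorem ncard_edgeSet_rulerGraph_le (n : ℕ) :
    ((rulerGraph n).edgeSet.ncard : ℝ) ≤ 27 * n * Real.log n := by
  rcases lt_or_ge n 2 with hn | hn
  · have : (rulerGraph n).edgeSet = ∅ := by
      ext e
      induction e with
      | h a b => simpa using fun h : (rulerGraph n).Adj a b => h.ne (Fin.ext (by omega))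
    interval_cases n <;> simp [this]
  · calc ((rulerGraph n).edgeSet.ncard : ℝ) ≤ 9 * n * (Nat.log 2 n + 1) := by
          exact_mod_cast ncard_edgeSet_rulerGraph_le_natLog n
      _ ≤ 9 * n * (3 * Real.log n) := by gcongr; exact natLog_two_add_one_le hn
      _ = 27 * n * Real.log n := by ring

lemma chordsCross_comm {n : ℕ} (a b c d : Fin n) :
    chordsCross a b c d ↔ chordsCross c d a b := Or.comm

lemma not_chordsCross_of_max_lt_min {n : ℕ} {a b c d : Fin n} (h : max a b < min c d) :
    ¬ chordsCross a b c d := by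
  have := min_le_max (a := a) (b := b)
  have := min_le_max (a := c) (b := d)
  rintro (⟨h1, h2, h3⟩ | ⟨h1, h2, h3⟩) <;> order

lemma exists_le_lt_add_le_two_mul_ordProj (t : ℕ) {c : ℕ} (hc : 0 < c) :
    ∃ m, t ≤ m ∧ m < t + c ∧ c ≤ 2 * ordProj[2] (m + 1) := by
  set d := 2 ^ Nat.log 2 c
  have hdc : d ≤ c := Nat.pow_log_le_self 2 hc.ne'
  have hcd : c < 2 * d := by
    simpa [d, pow_succ, mul_comm] using Nat.lt_pow_succ_log_self one_lt_two c
  have hd : 0 < d := by positivity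
  -- `m + 1` is the least multiple of `d` exceeding `t`
  have hpos : d * (t / d + 1) ≠ 0 := by positivity
  have hord : d ≤ ordProj[2] (d * (t / d + 1)) :=
    Nat.pow_le_pow_right two_pos
      ((Nat.prime_two.pow_dvd_iff_le_factorization hpos).mp (dvd_mul_right _ _))
  have hdiv := Nat.div_add_mod t d
  have hmod := Nat.mod_lt t hd
  refine ⟨d * (t / d + 1) - 1, by rw [mul_add]; omega, by rw [mul_add]; omega, ?_⟩
  rw [Nat.sub_add_cancel (Nat.one_le_iff_ne_zero.mpr hpos)]
  omega

section Layout

variable {V : Type*} [Fintype V] {s : ℕ}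

def blockStart (β : V → Fin s) (k : ℕ) : ℕ := #{v | (β v : ℕ) < k}

lemma blockStart_succ (β : V → Fin s) (i : Fin s) :
    blockStart β (i + 1) = blockStart β i + #{v | β v = i} := by
  classical
  rw [blockStart, blockStart, ← card_union_of_disjoint
    (disjoint_filter.mpr fun _ _ h h' => h.ne (congrArg Fin.val h')), ← filter_or]
  congr 1
  ext v
  simp only [mem_filter, mem_univ, true_and, ← Fin.val_inj]
  omega

lemma blockStart_mono (β : V → Fin s) : Monotone (blockStart β) := fun _ _ h =>
  card_le_card (monotone_filter_right _ fun _ _ hv => lt_of_lt_of_le hv h)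

lemma blockStart_le_card (β : V → Fin s) (k : ℕ) : blockStart β k ≤ Fintype.card V :=
  card_le_univ _

lemma lt_of_lt_blockStart_of_blockStart_le {β : V → Fin s} {a b : V} {x y : ℕ}
    (hx : x < blockStart β (β a + 1)) (hy : blockStart β (β b) ≤ y) (hab : β a < β b) : x < y :=
  hx.trans_le ((blockStart_mono β (Nat.succ_le_of_lt hab)).trans hy)

end Layout

lemma Finset.exists_injOn_lt_card_apply_eq {α : Type*} (B : Finset α) {b : α} (hb : b ∈ B)
    {d : ℕ} (hd : d < #B) :
    ∃ g : α → ℕ, Set.InjOn g B ∧ (∀ v ∈ B, g v < #B) ∧ g b = d := by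
  classical
  let e := B.equivFin.trans (Equiv.swap (B.equivFin ⟨b, hb⟩) ⟨d, hd⟩)
  refine ⟨fun v => if hv : v ∈ B then e ⟨v, hv⟩ else 0, fun v hv w hw h => ?_, fun v hv => ?_, ?_⟩
  · simp only [Finset.mem_coe] at hv hw
    simp only [hv, hw, dite_true] at h
    simpa using e.injective (Fin.ext h)
  · simp [hv]
  · simp [hb, e]

theorem exists_blockLayout {n s : ℕ} (β : Fin n → Fin s) (σ : Fin s → Fin n)
    (hσ : ∀ i, β (σ i) = i) :
    ∃ f : Fin n → Fin n, Function.Injective f ∧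
      (∀ v, blockStart β (β v) ≤ f v ∧ (f v : ℕ) < blockStart β (β v + 1)) ∧
      ∀ i, #{v | β v = i} ≤ 2 * ordProj[2] ((f (σ i) : ℕ) + 1) := by
  classical
  set B : Fin s → Finset (Fin n) := fun i => {v | β v = i}
  have hσB (i : Fin s) : σ i ∈ B i := by simp [B, hσ]
  have hvB (v : Fin n) : v ∈ B (β v) := by simp [B]
  choose p hp_ge hp_lt hp_ord using fun i : Fin s =>
    exists_le_lt_add_le_two_mul_ordProj (blockStart β i) (card_pos.mpr ⟨_, hσB i⟩)
  have hd (i : Fin s) : p i - blockStart β i < #(B i) := by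
    have := hp_ge i
    have := hp_lt i
    omega
  choose g hg_inj hg_lt hg_σ using fun i : Fin s =>
    (B i).exists_injOn_lt_card_apply_eq (hσB i) (hd i)
  have hlt (v : Fin n) : blockStart β (β v) + g (β v) v < blockStart β (β v + 1) := by
    rw [blockStart_succ]
    exact Nat.add_lt_add_left (hg_lt _ v (hvB v)) _
  have hle (v : Fin n) : blockStart β (β v + 1) ≤ n :=
    (blockStart_le_card β _).trans (Fintype.card_fin n).le
  let f (v : Fin n) : Fin n := ⟨blockStart β (β v) + g (β v) v, (hlt v).trans_le (hle v)⟩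
  have hf (v : Fin n) : blockStart β (β v) ≤ f v ∧ (f v : ℕ) < blockStart β (β v + 1) :=
    ⟨Nat.le_add_right _ _, hlt v⟩
  refine ⟨f, fun v w hvw => ?_, hf, fun i => ?_⟩
  · have hβ : β v = β w := by
      by_contra hne
      rcases lt_or_gt_of_ne hne with h | h
      · exact (lt_of_lt_blockStart_of_blockStart_le (hf v).2 (hf w).1 h).ne (by rw [hvw])
      · exact (lt_of_lt_blockStart_of_blockStart_le (hf w).2 (hf v).1 h).ne (by rw [hvw])
    have hg : g (β w) v = g (β w) w := by
      have := congrArg Fin.val hvw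
      simp only [f, hβ] at this
      omega
    exact hg_inj (β w) (hβ ▸ hvB v) (hvB w) hg
  · have hfσ : (f (σ i) : ℕ) = p i := by
      simp only [f, hσ, hg_σ]
      have := hp_ge i
      omega
    rw [hfσ]
    exact hp_ord i

/-- For a caterpillar, block `i` (the vertices `v` with `β v = i`) is the spine vertex `σ i`
together with its leaves. -/
structure IsSpineDecomposition {V : Type*} {s : ℕ} (T : SimpleGraph V) (β : V → Fin s)
    (σ : Fin s → V) : Prop where
  β_σ : ∀ i, β (σ i) = i
  le_succ_of_adj : ∀ ⦃a b⦄, T.Adj a b → β a ≤ β b → (β b : ℕ) ≤ β a + 1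
  spine_eq_of_adj : ∀ ⦃a b⦄, T.Adj a b → ∀ i, β a ≤ i → i ≤ β b → σ i = a ∨ σ i = b

namespace IsSpineDecomposition

variable {n s : ℕ} {T : SimpleGraph (Fin n)} {β : Fin n → Fin s} {σ : Fin s → Fin n}

lemma spine_eq_of_adj_of_mem_uIcc (hD : IsSpineDecomposition T β σ) {a b : Fin n}
    (hab : T.Adj a b) {i : Fin s} (hi : i ∈ Set.uIcc (β a) (β b)) : σ i = a ∨ σ i = b := by
  rcases Set.mem_uIcc.mp hi with ⟨h₁, h₂⟩ | ⟨h₁, h₂⟩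
  · exact hD.spine_eq_of_adj hab i h₁ h₂
  · exact (hD.spine_eq_of_adj hab.symm i h₁ h₂).symm

theorem not_chordsCross (hD : IsSpineDecomposition T β σ) {f : Fin n → Fin n}
    (hf : ∀ a b, β a < β b → f a < f b) {a b x y : Fin n} (hab : T.Adj a b) (hxy : T.Adj x y)
    (hax : a ≠ x) (hay : a ≠ y) (hbx : b ≠ x) (hby : b ≠ y) :
    ¬ chordsCross (f a) (f b) (f x) (f y) := by
  have hsep {a b x y : Fin n} (h : max (β a) (β b) < min (β x) (β y)) :
      max (f a) (f b) < min (f x) (f y) := by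
    simp only [max_lt_iff, lt_min_iff] at h ⊢
    exact ⟨⟨hf _ _ h.1.1, hf _ _ h.1.2⟩, hf _ _ h.2.1, hf _ _ h.2.2⟩
  rcases lt_or_ge (max (β a) (β b)) (min (β x) (β y)) with h | h
  · exact not_chordsCross_of_max_lt_min (hsep h)
  rcases lt_or_ge (max (β x) (β y)) (min (β a) (β b)) with h' | h'
  · rw [chordsCross_comm]
    exact not_chordsCross_of_max_lt_min (hsep h')
  -- the two block ranges overlap, so both edges contain the spine vertex of a common block
  exfalso
  set i := max (min (β a) (β b)) (min (β x) (β y))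
  have h₁ := hD.spine_eq_of_adj_of_mem_uIcc hab (i := i) ⟨le_max_left _ _, max_le min_le_max h⟩
  have h₂ := hD.spine_eq_of_adj_of_mem_uIcc hxy (i := i) ⟨le_max_right _ _, max_le h' min_le_max⟩
  rcases h₁ with h₁ | h₁ <;> rcases h₂ with h₂ | h₂
  exacts [hax (h₁.symm.trans h₂), hay (h₁.symm.trans h₂), hbx (h₁.symm.trans h₂),
    hby (h₁.symm.trans h₂)]

theorem rulerGraph_adj (hD : IsSpineDecomposition T β σ) {f : Fin n → Fin n}
    (hinj : Function.Injective f)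
    (hblock : ∀ v, blockStart β (β v) ≤ f v ∧ (f v : ℕ) < blockStart β (β v + 1))
    (hreach : ∀ i, #{v | β v = i} ≤ 2 * ordProj[2] ((f (σ i) : ℕ) + 1))
    {a b : Fin n} (hab : T.Adj a b) : (rulerGraph n).Adj (f a) (f b) := by
  wlog hβ : β a ≤ β b generalizing a b
  · exact (this hab.symm (le_of_not_ge hβ)).symm
  rw [rulerGraph, SimpleGraph.fromRel_adj, Nat.dist_comm (f b : ℕ)]
  refine ⟨hinj.ne hab.ne, ?_⟩
  have ha := hblock a
  have hb := hblock b
  have hsa := blockStart_succ β (β a)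
  have hσa := hreach (β a)
  rcases (hD.le_succ_of_adj hab hβ).lt_or_eq with hlt | hsucc
  · -- both ends lie in one block, whose spine vertex is one of them
    have hβab : β a = β b := le_antisymm hβ (Fin.le_iff_val_le_val.mpr (by omega))
    rw [← hβab] at hb
    unfold Nat.dist
    rcases hD.spine_eq_of_adj hab (β a) le_rfl hβ with h | h <;> rw [h] at hσa <;> omega
  · -- consecutive blocks, whose spine vertices are `a` and `b`
    have hσa' : σ (β a) = a := by
      refine (hD.spine_eq_of_adj hab (β a) le_rfl hβ).resolve_right fun h => ?_
      have := congrArg β h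
      rw [hD.β_σ] at this
      omega
    have hσb' : σ (β b) = b := by
      refine (hD.spine_eq_of_adj hab (β b) hβ le_rfl).resolve_left fun h => ?_
      have := congrArg β h
      rw [hD.β_σ] at this
      omega
    have hσb := hreach (β b)
    have hsb := blockStart_succ β (β b)
    rw [hσa'] at hσa
    rw [hσb'] at hσb
    rw [hsucc] at hb hsb
    unfold Nat.dist
    omega

theorem exists_isPlaneEmb_rulerGraph (hD : IsSpineDecomposition T β σ) :
    ∃ f, IsPlaneEmb T (rulerGraph n) f := by
  obtain ⟨f, hinj, hblock, hreach⟩ := exists_blockLayout β σ hD.β_σ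
  refine ⟨f, hinj, fun a b => hD.rulerGraph_adj hinj hblock hreach, ?_⟩
  intro a b x y hab hxy hax hay hbx hby
  exact hD.not_chordsCross (fun a b h => Fin.lt_def.mpr (lt_of_lt_blockStart_of_blockStart_le
    (hblock a).2 (hblock b).1 h)) hab hxy hax hay hbx hby

end IsSpineDecomposition

lemma SimpleGraph.Connected.exists_adj_ne {V : Type*} [Fintype V] {G : SimpleGraph V}
    (hG : G.Connected) (hV : 2 < Fintype.card V) {v w : V} (hv : ∀ x, G.Adj v x → x = w) :
    ∃ x, G.Adj w x ∧ x ≠ v := by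
  classical
  by_contra! hw
  have hclosed {a c : V} (p : G.Walk a c) : a = v ∨ a = w → c = v ∨ c = w := by
    induction p with
    | nil => exact id
    | cons h _ ih =>
      rintro (rfl | rfl)
      · exact ih (Or.inr (hv _ h))
      · exact ih (Or.inl (hw _ h))
  have hsub : univ ⊆ {v, w} := fun c _ => by
    simpa using hclosed (hG.preconnected v c).some (Or.inl rfl)
  have := (card_le_card hsub).trans card_le_two
  rw [card_univ] at this
  omega

lemma SimpleGraph.IsAcyclic.val_add_one_eq_of_adj {V : Type*} {G : SimpleGraph V}
    (hG : G.IsAcyclic) {s : ℕ} {u : Fin s → V} (hu : Function.Injective u)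
    (hpath : ∀ i j : Fin s, (i : ℕ) + 1 = j → G.Adj (u i) (u j)) {i j : Fin s} (hij : i < j)
    (hadj : G.Adj (u i) (u j)) : (i : ℕ) + 1 = j := by
  by_contra hne
  have hij' : (i : ℕ) < j := hij
  -- otherwise the spine from `u i` to `u j` avoids the edge `u i u j`, which is a bridge
  have hreach (k : ℕ) (hik : (i : ℕ) ≤ k) (hkj : k ≤ j) :
      (G.deleteEdges {s(u i, u j)}).Reachable (u i) (u ⟨k, by omega⟩) := by
    induction k, hik using Nat.le_induction with
    | base => rfl
    | succ k hik ih =>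
      refine (ih (by omega)).trans (SimpleGraph.Adj.reachable ?_)
      rw [SimpleGraph.deleteEdges_adj, Set.mem_singleton_iff, Sym2.eq_iff]
      refine ⟨hpath _ _ rfl, ?_⟩
      rintro (⟨h₁, h₂⟩ | ⟨h₁, -⟩)
      · have : k = i := congrArg Fin.val (hu h₁)
        have : k + 1 = j := congrArg Fin.val (hu h₂)
        omega
      · have : k = j := congrArg Fin.val (hu h₁)
        omega
  exact isAcyclic_iff_forall_adj_isBridge.mp hG hadj (hreach j hij'.le le_rfl)

lemma isSpineDecomposition_id {n : ℕ} (hn : n ≤ 2) (T : SimpleGraph (Fin n)) :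
    IsSpineDecomposition T id id where
  β_σ _ := rfl
  le_succ_of_adj a b _ _ := by
    have := a.isLt
    have := b.isLt
    simp only [id]
    omega
  spine_eq_of_adj a b hab i h₁ h₂ := by
    have := hab.ne
    have := b.isLt
    simp only [id, Fin.ext_iff, Fin.le_def] at *
    omega

lemma isSpineDecomposition_of_spine {V : Type*} {T : SimpleGraph V} (hT : T.IsAcyclic) {s : ℕ}
    {u : Fin s → V} (hu : Function.Injective u)
    (hpath : ∀ i j : Fin s, (i : ℕ) + 1 = j → T.Adj (u i) (u j)) {β : V → Fin s}
    (hβu : ∀ i, β (u i) = i) (hβ : ∀ v, u (β v) = v ∨ ∀ x, T.Adj v x ↔ x = u (β v)) :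
    IsSpineDecomposition T β u := by
  have hedge {a b : V} (hab : T.Adj a b) (hle : β a ≤ β b) :
      (β a = β b ∧ (u (β a) = a ∨ u (β a) = b)) ∨
        ((β b : ℕ) = β a + 1 ∧ u (β a) = a ∧ u (β b) = b) := by
    rcases hβ a with ha | ha
    · rcases hβ b with hb | hb
      · right
        refine ⟨?_, ha, hb⟩
        have hlt : β a < β b := hle.lt_of_ne fun h => hab.ne (by rw [← ha, ← hb, h])
        rw [← ha, ← hb] at hab
        exact (hT.val_add_one_eq_of_adj hu hpath hlt hab).symm
      · have hab' := (hb a).mp hab.symm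
        have hβab : β a = β b := by rw [hab', hβu]
        exact Or.inl ⟨hβab, Or.inl (by rw [hβab, ← hab'])⟩
    · have := (ha b).mp hab
      exact Or.inl ⟨by rw [this, hβu], Or.inr this.symm⟩
  refine ⟨hβu, fun a b hab hle => ?_, fun a b hab i h₁ h₂ => ?_⟩
  · rcases hedge hab hle with ⟨h, -⟩ | ⟨h, -⟩
    · rw [h]; omega
    · omega
  · rcases hedge hab (h₁.trans h₂) with ⟨h, h'⟩ | ⟨h, ha, hb⟩
    · rwa [← le_antisymm h₁ (h ▸ h₂)]
    · rcases (Fin.le_iff_val_le_val.mp h₂).lt_or_eq with h₃ | h₃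
      · left; rwa [← le_antisymm h₁ (Fin.le_iff_val_le_val.mpr (by omega))]
      · right; rwa [Fin.ext h₃]

theorem IsCaterpillar.exists_isSpineDecomposition {n : ℕ} {T : SimpleGraph (Fin n)}
    (hT : IsCaterpillar T) : ∃ (s : ℕ) (β : Fin n → Fin s) (σ : Fin s → Fin n),
      IsSpineDecomposition T β σ := by
  rcases le_or_gt n 2 with hn | hn
  · exact ⟨n, id, id, isSpineDecomposition_id hn T⟩
  obtain ⟨htree, s, u, hu, hpath, hcover⟩ := hT
  have : Nontrivial (Fin n) := Fin.nontrivial_iff_two_le.mpr hn.le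
  have hleaf (v : Fin n) (hv : v ∉ Set.range u) : ∃ i, ∀ x, T.Adj v x ↔ x = u i := by
    obtain ⟨w, hvw⟩ := htree.connected.preconnected.exists_adj_of_nontrivial v
    have hv' (x : Fin n) (hx : T.Adj v x) : x = w :=
      by_contra fun hxw => hv (hcover v ⟨x, w, hxw, hx, hvw⟩)
    obtain ⟨x, hwx, hxv⟩ := htree.connected.exists_adj_ne (by simpa using hn) hv'
    obtain ⟨i, rfl⟩ := hcover w ⟨v, x, hxv.symm, hvw.symm, hwx⟩
    exact ⟨i, fun x => ⟨hv' x, fun h => h ▸ hvw⟩⟩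
  -- the conjunct `v ∉ Set.range u` stops a spine end from being assigned to its neighbour's block
  have hindex (v : Fin n) : ∃ i, u i = v ∨ v ∉ Set.range u ∧ ∀ x, T.Adj v x ↔ x = u i := by
    by_cases hv : v ∈ Set.range u
    · obtain ⟨i, hi⟩ := hv
      exact ⟨i, Or.inl hi⟩
    · obtain ⟨i, hi⟩ := hleaf v hv
      exact ⟨i, Or.inr ⟨hv, hi⟩⟩
  choose β hβ using hindex
  have hβu (i : Fin s) : β (u i) = i := by
    rcases hβ (u i) with h | ⟨h, -⟩
    · exact hu h
    · exact absurd ⟨i, rfl⟩ h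
  exact ⟨s, β, u, isSpineDecomposition_of_spine htree.isAcyclic hu hpath hβu
    fun v => (hβ v).imp_right And.right⟩

/-- For every `n` there is a convex geometric graph on `{1,…,n}` with `O(n log n)`
edges into which every `n`-vertex caterpillar embeds without crossings. -/
theorem stmt_15 :
    ∃ c : ℝ, 0 < c ∧ ∀ n : ℕ, ∃ G : SimpleGraph (Fin n),
      (∀ T : SimpleGraph (Fin n), IsCaterpillar T → ∃ f, IsPlaneEmb T G f) ∧
      ((G.edgeSet.ncard : ℝ)) ≤ c * (n : ℝ) * Real.log n := by
  refine ⟨27, by norm_num, fun n => ⟨rulerGraph n, fun T hT => ?_, ncard_edgeSet_rulerGraph_le n⟩⟩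
  obtain ⟨s, β, σ, hD⟩ := hT.exists_isSpineDecomposition
  exact hD.exists_isPlaneEmb_rulerGraph
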